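/- arXiv:2211.05173 — 4 statements merged into one kernel-verified Lean document; each statement's English description precedes it below -/
import Mathlib

section
/- For every closure operator μ on the power set of a finite set U, the collection of keys of μ (minimal sets K with respect to inclusion such that Kμ equals a given closed set) is a hereditary collection: every subset of a key is a key. -/
open Set

variable {U : Type*}

/-- A closure operator on the power set of `U`: inclusion, monotonicity, idempotence. -/
def IsClosure (μ : Set U → Set U) : Prop :=
  (∀ X, X ⊆ μ X) ∧ (∀ X Y : Set U, X ⊆ Y → μ X ⊆ μ Y) ∧ (∀ X, μ (μ X) = μ X)

/-- `K` is a key of `μ`: no proper subset of `K` has the same closure. -/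
def IsKey (μ : Set U → Set U) (K : Set U) : Prop :=
  ∀ S : Set U, S ⊂ K → μ S ≠ μ K

/-- One step of the Extension-by-Closure recurrence for a set of pairs `α`. -/
def ecStep (α : Set (Set U × Set U)) (X : Set U) : Set U :=
  X ∪ ⋃ p ∈ {q ∈ α | q.1 ⊆ X}, p.2

/-- The iterates `Xα_t` of the Extension-by-Closure recurrence. -/
def ecIter (α : Set (Set U × Set U)) (X : Set U) : ℕ → Set U
  | 0 => X
  | n + 1 => ecStep α (ecIter α X n)

/-- `Xα⁺`: the eventual stable value of the increasing recurrence
(for finite `U` the union over all iterates is the stable limit). -/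
def extC (α : Set (Set U × Set U)) : Set U → Set U :=
  fun X => ⋃ n, ecIter α X n

/-- The closure `μ` viewed as a set of pairs `(X, Xμ)`. -/
def graphOf (μ : Set U → Set U) : Set (Set U × Set U) :=
  {p | p.2 = μ p.1}

/-- `α` is a cover of `μ`: a subset of `μ` (as pairs) with `α⁺ = μ`. -/
def IsCover (μ : Set U → Set U) (α : Set (Set U × Set U)) : Prop :=
  α ⊆ graphOf μ ∧ extC α = μ


namespace IsClosure

variable {μ : Set U → Set U}

theorem subset_closure (hμ : IsClosure μ) (X : Set U) : X ⊆ μ X := hμ.1 X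

theorem closure_mono (hμ : IsClosure μ) {X Y : Set U} (h : X ⊆ Y) : μ X ⊆ μ Y := hμ.2.1 X Y h

theorem closure_closure (hμ : IsClosure μ) (X : Set U) : μ (μ X) = μ X := hμ.2.2 X

theorem closure_subset_of_subset_closure (hμ : IsClosure μ) {X Y : Set U} (h : X ⊆ μ Y) :
    μ X ⊆ μ Y :=
  (hμ.closure_mono h).trans (hμ.closure_closure Y).le

theorem closure_union_subset_of_closure_subset (hμ : IsClosure μ) {S Y : Set U}
    (h : μ S ⊆ μ Y) (Z : Set U) : μ (S ∪ Z) ⊆ μ (Y ∪ Z) :=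
  hμ.closure_subset_of_subset_closure <| union_subset
    ((hμ.subset_closure S).trans (h.trans (hμ.closure_mono subset_union_left)))
    (subset_union_right.trans (hμ.subset_closure _))

theorem closure_union_congr (hμ : IsClosure μ) {S Y : Set U} (h : μ S = μ Y) (Z : Set U) :
    μ (S ∪ Z) = μ (Y ∪ Z) :=
  (hμ.closure_union_subset_of_closure_subset h.le Z).antisymm
    (hμ.closure_union_subset_of_closure_subset h.ge Z)

end IsClosure

/-- Exchanging `Y` for `S` inside the key `K = Y ∪ (K \ Y)` keeps the closure, so the key
property of `K` forbids it. -/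
theorem keys_hereditary_general (μ : Set U → Set U) (hμ : IsClosure μ)
    (K Y : Set U) (hK : IsKey μ K) (hYK : Y ⊆ K) : IsKey μ Y := by
  intro S hSY hμSY
  rw [← union_sdiff_cancel hYK] at hK
  have hSK : S ∪ (K \ Y) ⊂ Y ∪ (K \ Y) :=
    sup_lt_sup_of_lt_of_inf_le_inf hSY (by simp)
  exact hK _ hSK (hμ.closure_union_congr hμSY _)

theorem keys_hereditary [Finite U] (μ : Set U → Set U) (hμ : IsClosure μ)
    (K Y : Set U) (hK : IsKey μ K) (hYK : Y ⊆ K) : IsKey μ Y :=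
  keys_hereditary_general μ hμ K Y hK hYK
end

section
/- Let μ be a closure operator on 2^U with U finite, and let α be the restriction of μ to its keys, i.e., α = {(K, Kμ) | K a key of μ}. Then the extension by closure α⁺ equals μ: for every X ⊆ U, Xα⁺ = Xμ. -/
open Set

variable {U : Type*}

/-!
Every pair of the key restriction lies in the graph of `μ`, and adding `Sμ` once `S ⊆ Y ⊆ Xμ`
stays inside `Xμ = Xμμ`, so `Xα⁺ ⊆ Xμ`. Conversely, a minimal `K ⊆ X` (it exists as `U` is finite) with
`Kμ = Xμ` is a key, so the pair `(K, Xμ)` already puts all of `Xμ` into the first iterate.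
-/

lemma exists_isKey_subset_closure_eq [Finite U] (μ : Set U → Set U) (X : Set U) :
    ∃ K ⊆ X, IsKey μ K ∧ μ K = μ X := by
  obtain ⟨K, hKX, hmin⟩ := exists_minimal_le_of_wellFoundedLT (fun S => μ S = μ X) X rfl
  exact ⟨K, hKX, fun S hSK hSμ => hSK.not_ge (hmin.le_of_le (hSμ.trans hmin.prop) hSK.le),
    hmin.prop⟩

lemma ecStep_subset_closure {μ : Set U → Set U} (hμ : IsClosure μ) {α : Set (Set U × Set U)}
    (hα : α ⊆ graphOf μ) {X Y : Set U} (hY : Y ⊆ μ X) : ecStep α Y ⊆ μ X := by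
  refine union_subset hY (iUnion₂_subset fun p ⟨hpα, hpY⟩ => ?_)
  calc p.2 = μ p.1 := hα hpα
    _ ⊆ μ (μ X) := hμ.2.1 _ _ (hpY.trans hY)
    _ = μ X := hμ.2.2 X

lemma extC_subset_closure {μ : Set U → Set U} (hμ : IsClosure μ) {α : Set (Set U × Set U)}
    (hα : α ⊆ graphOf μ) (X : Set U) : extC α X ⊆ μ X := by
  refine iUnion_subset fun n => ?_
  induction n with
  | zero => exact hμ.1 X
  | succ n ih => exact ecStep_subset_closure hμ hα ih

lemma subset_extC_of_mem {α : Set (Set U × Set U)} {S T X : Set U} (hST : (S, T) ∈ α)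
    (hSX : S ⊆ X) : T ⊆ extC α X :=
  calc T ⊆ ecStep α X := subset_union_of_subset_right (subset_biUnion_of_mem
        (u := fun p : Set U × Set U => p.2) (show (S, T) ∈ {q ∈ α | q.1 ⊆ X} from ⟨hST, hSX⟩)) _
    _ ⊆ extC α X := subset_iUnion (ecIter α X) 1

theorem extC_of_key_restriction [Finite U] (μ : Set U → Set U) (hμ : IsClosure μ) :
    extC {p : Set U × Set U | p.2 = μ p.1 ∧ IsKey μ p.1} = μ := by
  funext X
  refine (extC_subset_closure hμ (fun p hp => hp.1) X).antisymm ?_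
  obtain ⟨K, hKX, hK, hKμ⟩ := exists_isKey_subset_closure_eq μ X
  exact hKμ ▸ subset_extC_of_mem ⟨rfl, hK⟩ hKX
end

section
/- Let μ be a closure operator on 2^U with U finite, and let α ⊆ μ be a cover of μ (meaning α⁺ = μ). If β ⊆ α is redundant (some pair (S,Sμ) ∈ β satisfies (β \ {(S,Sμ)})⁺ = β⁺), then α itself is redundant: there is a pair (X,Xμ) ∈ α with (α \ {(X,Xμ)})⁺ = α⁺. -/
/-!
A pair `p` can be dropped from `γ` without changing `γ⁺` exactly when `p.2` is already derived
from `p.1` by the remaining pairs, since `Xγ⁺` is the least superset of `X` closed under `γ`.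
That criterion is monotone in `γ`: whatever `β \ {p}` derives, the larger `α \ {p}` derives too.
-/

open Set

variable {U : Type*}

/-- `α` is redundant: some single pair can be removed without changing `α⁺`. -/
def Redundant (α : Set (Set U × Set U)) : Prop :=
  ∃ p ∈ α, extC (α \ {p}) = extC α

def IsClosedUnder (γ : Set (Set U × Set U)) (Y : Set U) : Prop :=
  ∀ q ∈ γ, q.1 ⊆ Y → q.2 ⊆ Y

section

variable {γ δ : Set (Set U × Set U)} {X Y : Set U} {p : Set U × Set U}

lemma subset_ecStep (hp : p ∈ γ) (h : p.1 ⊆ X) : p.2 ⊆ ecStep γ X :=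
  fun _ hx => Or.inr (mem_iUnion₂.2 ⟨p, ⟨hp, h⟩, hx⟩)

lemma ecIter_monotone (γ : Set (Set U × Set U)) (X : Set U) : Monotone (ecIter γ X) :=
  monotone_nat_of_le_succ fun _ => subset_union_left

lemma subset_extC : X ⊆ extC γ X :=
  subset_iUnion (ecIter γ X) 0

lemma subset_extC_of_mem_s5 (hp : p ∈ γ) : p.2 ⊆ extC γ p.1 :=
  (subset_ecStep hp subset_rfl).trans (subset_iUnion (ecIter γ p.1) 1)

lemma ecIter_mono (h : γ ⊆ δ) : ∀ n, ecIter γ X n ⊆ ecIter δ X n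
  | 0 => subset_rfl
  | n + 1 => union_subset ((ecIter_mono h n).trans subset_union_left) <|
      iUnion₂_subset fun _ hq => subset_ecStep (h hq.1) (hq.2.trans (ecIter_mono h n))

lemma extC_mono (h : γ ⊆ δ) : extC γ X ⊆ extC δ X :=
  iUnion_mono (ecIter_mono h)

lemma extC_subset_of_isClosedUnder (hXY : X ⊆ Y) (hY : IsClosedUnder γ Y) : extC γ X ⊆ Y := by
  refine iUnion_subset fun n => ?_
  induction n with
  | zero => exact hXY
  | succ n ih => exact union_subset ih (iUnion₂_subset fun q hq => hY q hq.1 (hq.2.trans ih))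

/-- Finiteness makes each premise `q.1` fit into a single iterate. -/
lemma isClosedUnder_extC [Finite U] : IsClosedUnder γ (extC γ X) := by
  intro q hq hq1
  obtain ⟨n, hn⟩ := (ecIter_monotone γ X).directed_le.exists_mem_subset_of_finset_subset_biUnion
    (s := (toFinite q.1).toFinset) (by rw [Finite.coe_toFinset]; exact hq1)
  have hq1n : q.1 ⊆ ecIter γ X n := by simpa only [Finite.coe_toFinset] using hn
  exact (subset_ecStep hq hq1n).trans (subset_iUnion (ecIter γ X) (n + 1))

lemma extC_subset_extC [Finite U] (h : Y ⊆ extC γ X) : extC γ Y ⊆ extC γ X :=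
  extC_subset_of_isClosedUnder h isClosedUnder_extC

theorem extC_diff_singleton_eq_iff [Finite U] (hp : p ∈ γ) :
    extC (γ \ {p}) = extC γ ↔ p.2 ⊆ extC (γ \ {p}) p.1 := by
  refine ⟨fun h => h ▸ subset_extC_of_mem_s5 hp, fun h => funext fun X => ?_⟩
  refine (extC_mono sdiff_subset).antisymm (extC_subset_of_isClosedUnder subset_extC ?_)
  intro q hq hq1
  by_cases hqp : q = p
  · subst hqp
    exact h.trans (extC_subset_extC hq1)
  · exact isClosedUnder_extC q ⟨hq, hqp⟩ hq1

end

theorem redundant_subset_redundant_cover_general [Finite U] (α β : Set (Set U × Set U))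
    (hβα : β ⊆ α) (hβ : Redundant β) : Redundant α := by
  obtain ⟨p, hpβ, hp⟩ := hβ
  have hderiv : p.2 ⊆ extC (β \ {p}) p.1 := (extC_diff_singleton_eq_iff hpβ).1 hp
  exact ⟨p, hβα hpβ, (extC_diff_singleton_eq_iff (hβα hpβ)).2 <|
    hderiv.trans (extC_mono (sdiff_subset_sdiff_left hβα))⟩

theorem redundant_subset_redundant_cover [Finite U] (μ : Set U → Set U)
    (hμ : IsClosure μ) (α β : Set (Set U × Set U)) (hα : IsCover μ α)
    (hβα : β ⊆ α) (hβ : Redundant β) : Redundant α :=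
  redundant_subset_redundant_cover_general α β hβα hβ
end

section
/- Direct determination is transitive: if Xμ = Yμ = Zμ = C, Y ⊆ X(μ_{⊂C})⁺, and Z ⊆ Y(μ_{⊂C})⁺, then Z ⊆ X(μ_{⊂C})⁺. -/
open Set

variable {U : Type*}

/-!
An extension by closure `Xα⁺` is closed under one further step of the recurrence: a pair
`(S, T) ∈ α` with `S ⊆ Xα⁺` and `S` finite already has `S` inside a single iterate `Xα_n`,
so `T ⊆ Xα_{n+1}`. Hence `Y ⊆ Xα⁺` implies `Yα⁺ ⊆ Xα⁺`, which gives transitivity.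
-/

section ExtensionByClosure

variable {α : Set (Set U × Set U)}

lemma ecStep_mono {X Y : Set U} (h : X ⊆ Y) : ecStep α X ⊆ ecStep α Y :=
  union_subset_union h <| biUnion_mono (fun _ hp => ⟨hp.1, hp.2.trans h⟩) fun _ _ => le_rfl

lemma monotone_ecIter (α : Set (Set U × Set U)) (X : Set U) : Monotone (ecIter α X) :=
  monotone_nat_of_le_succ fun _ => subset_union_left

lemma Set.Finite.exists_subset_ecIter {S X : Set U} (hS : S.Finite) (h : S ⊆ extC α X) :
    ∃ n, S ⊆ ecIter α X n := by
  obtain ⟨n, hn⟩ := (monotone_ecIter α X).directed_le.exists_mem_subset_of_finset_subset_biUnion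
    (s := hS.toFinset) (by simpa [extC] using h)
  exact ⟨n, by simpa using hn⟩

lemma ecStep_extC_subset (hα : ∀ p ∈ α, p.1.Finite) (X : Set U) :
    ecStep α (extC α X) ⊆ extC α X := by
  refine union_subset subset_rfl <| iUnion₂_subset fun p ⟨hpα, hpX⟩ => ?_
  obtain ⟨n, hn⟩ := (hα p hpα).exists_subset_ecIter hpX
  have hstep : p.2 ⊆ ecIter α X (n + 1) :=
    (subset_biUnion_of_mem (u := Prod.snd) (show p ∈ {q ∈ α | q.1 ⊆ ecIter α X n} from
      ⟨hpα, hn⟩)).trans subset_union_right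
  exact hstep.trans (subset_iUnion _ _)

lemma extC_subset_extC_s15 (hα : ∀ p ∈ α, p.1.Finite) {X Y : Set U} (hXY : Y ⊆ extC α X) :
    extC α Y ⊆ extC α X := by
  refine iUnion_subset fun n => ?_
  induction n with
  | zero => exact hXY
  | succ n ih => exact (ecStep_mono ih).trans (ecStep_extC_subset hα X)

end ExtensionByClosure

theorem directDetermination_trans_general [Finite U] (μ : Set U → Set U)
    (C X Y Z : Set U)
    (hXY : Y ⊆ extC {p ∈ graphOf μ | p.2 ⊂ C} X)
    (hYZ : Z ⊆ extC {p ∈ graphOf μ | p.2 ⊂ C} Y) :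
    Z ⊆ extC {p ∈ graphOf μ | p.2 ⊂ C} X :=
  hYZ.trans <| extC_subset_extC_s15 (fun p _ => p.1.toFinite) hXY

theorem directDetermination_trans [Finite U] (μ : Set U → Set U) (hμ : IsClosure μ)
    (C X Y Z : Set U) (hX : μ X = C) (hY : μ Y = C) (hZ : μ Z = C)
    (hXY : Y ⊆ extC {p ∈ graphOf μ | p.2 ⊂ C} X)
    (hYZ : Z ⊆ extC {p ∈ graphOf μ | p.2 ⊂ C} Y) :
    Z ⊆ extC {p ∈ graphOf μ | p.2 ⊂ C} X :=
  directDetermination_trans_general μ C X Y Z hXY hYZ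
end
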